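/- If a_• = (a_1, a_2, a_3, a_4) is a reduced Schubert problem, then a_1 = a_2 = a_3 = a_4; moreover, for every positive integer a, K(a, a, a, a) = 1 + a. -/

import Mathlib

/-- The Kostka number `K(a₁,…,aₘ)` of the two-rowed rectangular shape `(s,s)`,
where `2s = a₁ + ⋯ + aₘ`: the number of semistandard Young tableaux with two rows
of length `s` (entries weakly increasing along rows, strictly increasing down
columns) containing exactly `aᵢ` entries equal to `i`.  A tableau is encoded as
`T : Fin 2 → Fin s → Fin m`, where the value `T r c` encodes the entry `(T r c) + 1`
in row `r`, column `c`.  If the sum of the entries is odd, the Kostka number is `0`. -/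
noncomputable def kostka (a : List ℕ) : ℕ :=
  if a.sum % 2 = 0 then
    Nat.card {T : Fin 2 → Fin (a.sum / 2) → Fin a.length //
      (∀ r, Monotone (T r)) ∧
      (∀ c, T 0 c < T 1 c) ∧
      (∀ i : Fin a.length,
        Nat.card {p : Fin 2 × Fin (a.sum / 2) // T p.1 p.2 = i} = a.get i)}
  else 0

/-! Column strictness keeps the largest entry `4` out of the top row and the entry `1` out of the
bottom row, so the `a` ones open the top row and the `a` fours close the bottom row. A weakly
increasing row is determined by how often each value occurs in it, so a tableau of content
`(a,a,a,a)` is determined by the number `x ≤ a` of twos in its top row (the bottom row then holds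
`a - x` twos and `x` threes), and every such `x` occurs. The first claim is linear arithmetic:
adding the two inequalities of complementary pairs gives `2s ≤ 2s`, hence equalities. -/

open Finset

theorem Fin.card_filter_val_mem_Ico {n l u : ℕ} (hu : u ≤ n) :
    #{c : Fin n | l ≤ (c : ℕ) ∧ (c : ℕ) < u} = u - l := by
  rw [← card_map Fin.valEmbedding, ← Nat.card_Ico]
  congr 1
  ext x
  simp only [mem_map, mem_filter, mem_univ, true_and, Fin.valEmbedding_apply, mem_Ico]
  constructor
  · rintro ⟨c, hc, rfl⟩; exact hc
  · intro hx; exact ⟨⟨x, by omega⟩, hx, rfl⟩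

def stepRow (n p q r : ℕ) (c : Fin n) : Fin 4 :=
  if c < p then 0 else if c < q then 1 else if c < r then 2 else 3

theorem stepRow_monotone {n p q r : ℕ} : Monotone (stepRow n p q r) := by
  intro c d (hcd : c.val ≤ d.val)
  simp only [stepRow]
  split_ifs <;> simp [Fin.le_def] <;> omega

theorem card_stepRow_fiber {n p q r : ℕ} (hpq : p ≤ q) (hqr : q ≤ r) (hrn : r ≤ n)
    (v : Fin 4) :
    #{c | stepRow n p q r c = v} = ![p, q - p, r - q, n - r] v := by
  have key : ∀ l u : ℕ, u ≤ n →
      (∀ c : Fin n, stepRow n p q r c = v ↔ l ≤ (c : ℕ) ∧ (c : ℕ) < u) →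
      #{c | stepRow n p q r c = v} = u - l := fun l u hu h => by
    simp only [h, Fin.card_filter_val_mem_Ico hu]
  fin_cases v
  · simpa using key 0 p (by omega) fun c => by simp only [stepRow]; split_ifs <;> simp <;> omega
  · simpa using key p q (by omega) fun c => by simp only [stepRow]; split_ifs <;> simp <;> omega
  · simpa using key q r (by omega) fun c => by simp only [stepRow]; split_ifs <;> simp <;> omega
  · simpa using key r n le_rfl fun c => by simp only [stepRow]; split_ifs <;> simp <;> omega

theorem Nat.card_subtype_prod_eq_sum {ι κ α : Type*} [Fintype ι] [Fintype κ] [DecidableEq α]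
    (T : ι → κ → α) (i : α) :
    Nat.card {p : ι × κ // T p.1 p.2 = i} = ∑ r, #{c | T r c = i} := by
  rw [Nat.card_congr (Equiv.subtypeProdEquivSigmaSubtype fun r c => T r c = i),
    Nat.card_eq_fintype_card, Fintype.card_sigma]
  simp only [Fintype.card_subtype]

theorem Fin.sum_card_fiber_four {n : ℕ} (f : Fin n → Fin 4) :
    #{c | f c = 0} + #{c | f c = 1} + #{c | f c = 2} + #{c | f c = 3} = n := by
  rw [← Fin.sum_univ_four (f := fun v => #{c | f c = v}),
    ← card_eq_sum_card_fiberwise (fun c _ => mem_univ (f c)), card_univ, Fintype.card_fin]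

theorem List.count_ofFn_eq_card {α : Type*} [DecidableEq α] {n : ℕ} (f : Fin n → α)
    (v : α) :
    (List.ofFn f).count v = #{c | f c = v} := by
  induction n with
  | zero => simp
  | succ n ih =>
    rw [List.ofFn_succ, List.count_cons, ih, Fin.card_filter_univ_succ']
    simp [add_comm]

theorem Monotone.eq_of_card_fiber_eq {α : Type*} [LinearOrder α] {n : ℕ} {f g : Fin n → α}
    (hf : Monotone f) (hg : Monotone g) (h : ∀ v, #{c | f c = v} = #{c | g c = v}) : f = g :=
  List.ofFn_injective <| List.Perm.eq_of_sortedLE hf.sortedLE_ofFn hg.sortedLE_ofFn <|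
    List.perm_iff_count.2 fun v => by simp only [List.count_ofFn_eq_card, h]

def IsTwoRowTableau {s m : ℕ} (T : Fin 2 → Fin s → Fin m) (μ : Fin m → ℕ) : Prop :=
  (∀ r, Monotone (T r)) ∧ (∀ c, T 0 c < T 1 c) ∧
    ∀ i, Nat.card {p : Fin 2 × Fin s // T p.1 p.2 = i} = μ i

theorem kostka_eq_card (l : List ℕ) (s : ℕ) (hs : l.sum = 2 * s) :
    kostka l = Nat.card {T : Fin 2 → Fin s → Fin l.length // IsTwoRowTableau T l.get} := by
  obtain rfl : s = l.sum / 2 := by omega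
  exact if_pos (by omega)

section ConstantContentFour

variable {a : ℕ}

/-- The tableau with `x` entries `2` (encoded by `1`) in its top row. -/
def tableauOfTwos (a x : ℕ) : Fin 2 → Fin (2 * a) → Fin 4 :=
  ![stepRow (2 * a) a (a + x) (2 * a), stepRow (2 * a) 0 (a - x) a]

theorem tableauOfTwos_zero (x : ℕ) :
    tableauOfTwos a x 0 = stepRow (2 * a) a (a + x) (2 * a) := rfl

theorem tableauOfTwos_one (x : ℕ) : tableauOfTwos a x 1 = stepRow (2 * a) 0 (a - x) a := rfl

theorem tableauOfTwos_monotone (x : ℕ) : ∀ r, Monotone (tableauOfTwos a x r) :=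
  Fin.forall_fin_two.2
    ⟨tableauOfTwos_zero x ▸ stepRow_monotone, tableauOfTwos_one x ▸ stepRow_monotone⟩

theorem card_tableauOfTwos_zero_fiber {x : ℕ} (hx : x ≤ a) (v : Fin 4) :
    #{c | tableauOfTwos a x 0 c = v} = ![a, x, a - x, 0] v := by
  rw [tableauOfTwos_zero, card_stepRow_fiber (by omega) (by omega) le_rfl]
  fin_cases v <;> simp
  omega

theorem card_tableauOfTwos_one_fiber {x : ℕ} (hx : x ≤ a) (v : Fin 4) :
    #{c | tableauOfTwos a x 1 c = v} = ![0, a - x, x, a] v := by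
  rw [tableauOfTwos_one, card_stepRow_fiber (by omega) (by omega) (by omega)]
  fin_cases v <;> simp <;> omega

theorem isTwoRowTableau_tableauOfTwos {x : ℕ} (hx : x ≤ a) :
    IsTwoRowTableau (tableauOfTwos a x) fun _ => a := by
  refine ⟨tableauOfTwos_monotone x, fun c => ?_, fun i => ?_⟩
  · simp only [tableauOfTwos_zero, tableauOfTwos_one, stepRow]
    split_ifs <;> simp [Fin.lt_def] <;> omega
  · rw [Nat.card_subtype_prod_eq_sum, Fin.sum_univ_two, card_tableauOfTwos_zero_fiber hx,
      card_tableauOfTwos_one_fiber hx]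
    fin_cases i <;> simp <;> omega

theorem IsTwoRowTableau.exists_eq_tableauOfTwos {T : Fin 2 → Fin (2 * a) → Fin 4}
    (hT : IsTwoRowTableau T fun _ => a) : ∃ x ≤ a, T = tableauOfTwos a x := by
  obtain ⟨hmono, hcol, hcontent⟩ := hT
  have hrows (v : Fin 4) : #{c | T 0 c = v} + #{c | T 1 c = v} = a := by
    rw [← Fin.sum_univ_two (f := fun r => #{c | T r c = v}), ← Nat.card_subtype_prod_eq_sum,
      hcontent]
  have hno_four_top : #{c | T 0 c = 3} = 0 := by
    refine card_eq_zero.2 (filter_eq_empty_iff.2 fun c _ h => ?_)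
    exact absurd (hcol c) (h ▸ not_lt.2 (Fin.le_last _))
  have hno_one_bottom : #{c | T 1 c = 0} = 0 := by
    refine card_eq_zero.2 (filter_eq_empty_iff.2 fun c _ h => ?_)
    exact absurd (hcol c) (h ▸ not_lt.2 (Fin.zero_le _))
  have h0 := hrows 0
  have h1 := hrows 1
  have h2 := hrows 2
  have h3 := hrows 3
  have hsum0 := Fin.sum_card_fiber_four (T 0)
  have hsum1 := Fin.sum_card_fiber_four (T 1)
  have hx : #{c | T 0 c = 1} ≤ a := by omega
  refine ⟨_, hx, funext (Fin.forall_fin_two.2 ⟨?_, ?_⟩)⟩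
  · refine (hmono 0).eq_of_card_fiber_eq (tableauOfTwos_monotone _ 0) fun v => ?_
    rw [card_tableauOfTwos_zero_fiber hx]
    fin_cases v <;> simp only [Fin.zero_eta, Fin.mk_one, Fin.reduceFinMk, Matrix.cons_val_zero,
      Matrix.cons_val_one, Matrix.cons_val] <;> omega
  · refine (hmono 1).eq_of_card_fiber_eq (tableauOfTwos_monotone _ 1) fun v => ?_
    rw [card_tableauOfTwos_one_fiber hx]
    fin_cases v <;> simp only [Fin.zero_eta, Fin.mk_one, Fin.reduceFinMk, Matrix.cons_val_zero,
      Matrix.cons_val_one, Matrix.cons_val] <;> omega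

theorem card_isTwoRowTableau_const_four (a : ℕ) :
    Nat.card {T : Fin 2 → Fin (2 * a) → Fin 4 // IsTwoRowTableau T fun _ => a} = a + 1 := by
  let f (x : Fin (a + 1)) : {T : Fin 2 → Fin (2 * a) → Fin 4 // IsTwoRowTableau T fun _ => a} :=
    ⟨tableauOfTwos a x, isTwoRowTableau_tableauOfTwos (Nat.lt_succ_iff.1 x.2)⟩
  have hf : Function.Bijective f := by
    refine ⟨fun x y hxy => Fin.ext ?_, fun ⟨T, hT⟩ => ?_⟩
    · have := congrArg (fun T => #{c | T.1 0 c = 1}) hxy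
      simpa [f, card_tableauOfTwos_zero_fiber (Nat.lt_succ_iff.1 x.2),
        card_tableauOfTwos_zero_fiber (Nat.lt_succ_iff.1 y.2)] using this
    · obtain ⟨x, hx, rfl⟩ := hT.exists_eq_tableauOfTwos
      exact ⟨⟨x, Nat.lt_succ_iff.2 hx⟩, rfl⟩
  rw [← Nat.card_eq_of_bijective f hf, Nat.card_eq_fintype_card, Fintype.card_fin]

end ConstantContentFour

/-- A reduced Schubert problem `(a₁,a₂,a₃,a₄)` with four conditions has all entries
equal; moreover for every positive integer `a`, `K(a,a,a,a) = 1 + a`. -/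
theorem reduced_four_eq_and_kostka :
    (∀ a1 a2 a3 a4 s : ℕ,
      0 < a1 → 0 < a2 → 0 < a3 → 0 < a4 →
      a1 + a2 + a3 + a4 = 2 * s →
      a1 + a2 ≤ s → a1 + a3 ≤ s → a1 + a4 ≤ s →
      a2 + a3 ≤ s → a2 + a4 ≤ s → a3 + a4 ≤ s →
      a1 = a2 ∧ a2 = a3 ∧ a3 = a4) ∧
    (∀ a : ℕ, 0 < a → kostka [a, a, a, a] = 1 + a) := by
  refine ⟨by intros; omega, fun a _ => ?_⟩
  have hget : ([a, a, a, a] : List ℕ).get = fun _ => a := by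
    funext i
    fin_cases i <;> rfl
  rw [kostka_eq_card _ (2 * a) (by simp; ring), hget, add_comm]
  exact card_isTwoRowTableau_const_four a
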